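/- The Minimum Bounding Box mechanism on ℝ² with the l_p metric (p ≥ 2), which outputs y with y_j = max(min_i (x_i)_j, min(max_i (x_i)_j, π_j)) for each coordinate j, is strategyproof: no agent can strictly decrease d_p(x_i, y) by misreporting their location. -/
import Mathlib


open Finset

/-- The l_p distance on ℝ², for a real exponent p. -/
noncomputable def dp (p : ℝ) (x y : ℝ × ℝ) : ℝ :=
  (|x.1 - y.1| ^ p + |x.2 - y.2| ^ p) ^ (1/p)

/-- The Minimum Bounding Box mechanism: clamp each coordinate of the prediction to
the corresponding coordinate range of the agents. -/
noncomputable def bbox {n : ℕ} (x : Fin (n+1) → ℝ × ℝ) (π : ℝ × ℝ) : ℝ × ℝ :=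
  (max (univ.inf' univ_nonempty fun i => (x i).1)
      (min (univ.sup' univ_nonempty fun i => (x i).1) π.1),
   max (univ.inf' univ_nonempty fun i => (x i).2)
      (min (univ.sup' univ_nonempty fun i => (x i).2) π.2))

/-- 1D key lemma: a unilateral deviation cannot move the clamped coordinate
closer to the deviator's true coordinate. -/
lemma key {n : ℕ} (f : Fin (n+1) → ℝ) (π : ℝ) (i : Fin (n+1)) (b : ℝ) :
    |f i - max (univ.inf' univ_nonempty f) (min (univ.sup' univ_nonempty f) π)|
      ≤ |f i - max (univ.inf' univ_nonempty (Function.update f i b))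
          (min (univ.sup' univ_nonempty (Function.update f i b)) π)| := by
  set a := f i with ha
  set m := univ.inf' univ_nonempty f with hm
  set M := univ.sup' univ_nonempty f with hM
  set m' := univ.inf' univ_nonempty (Function.update f i b) with hm'
  set M' := univ.sup' univ_nonempty (Function.update f i b) with hM'
  set y := max m (min M π) with hy
  set y' := max m' (min M' π) with hy'
  have hma : m ≤ a := inf'_le _ (mem_univ i)
  have haM : a ≤ M := le_sup' _ (mem_univ i)
  rcases lt_trichotomy y a with hlt | heq | hgt
  · -- show y' ≤ y
    have hmy : m ≤ y := le_max_left _ _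
    have hminy : min M π ≤ y := le_max_right _ _
    have hπ : π ≤ y := by
      rcases le_total π M with h | h
      · simpa [min_eq_right h] using hminy
      · rw [min_eq_left h] at hminy; linarith
    obtain ⟨j0, -, hj0⟩ := exists_mem_eq_inf' (univ_nonempty (α := Fin (n+1))) f
    have hfj0 : f j0 ≤ y := by rw [← hj0, ← hm]; exact hmy
    have hji : j0 ≠ i := by
      intro h; rw [h, ← ha] at hfj0; linarith
    have hm'y : m' ≤ y := by
      calc m' ≤ Function.update f i b j0 := inf'_le _ (mem_univ j0)
        _ = f j0 := by rw [Function.update_of_ne hji]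
        _ ≤ y := hfj0
    have hy'y : y' ≤ y := max_le hm'y (le_trans (min_le_right _ _) hπ)
    rw [abs_of_nonneg (by linarith), abs_of_nonneg (by linarith)]
    linarith
  · simp [heq]
  · -- show y ≤ y'
    have hMy : y ≤ M := max_le (hma.trans haM) (min_le_left _ _)
    have hπ : y ≤ π := by
      have : y = min M π := by
        rcases max_cases m (min M π) with ⟨h1, h2⟩ | ⟨h1, h2⟩
        · rw [hy] at hgt ⊢; linarith [hgt, hma]
        · rw [hy, h1]
      rw [this]; exact min_le_right _ _
    have hymin : y ≤ M := hMy
    obtain ⟨j0, -, hj0⟩ := exists_mem_eq_sup' (univ_nonempty (α := Fin (n+1))) f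
    have hfj0 : y ≤ f j0 := by
      rw [← hj0, ← hM]
      rcases max_cases m (min M π) with ⟨h1, h2⟩ | ⟨h1, h2⟩
      · rw [hy, h1] at hgt ⊢; linarith
      · rw [hy, h1]; exact min_le_left _ _
    have hji : j0 ≠ i := by
      intro h; rw [h, ← ha] at hfj0; linarith
    have hM'y : y ≤ M' := by
      calc y ≤ f j0 := hfj0
        _ = Function.update f i b j0 := by rw [Function.update_of_ne hji]
        _ ≤ M' := le_sup' _ (mem_univ j0)
    have hy'y : y ≤ y' := le_trans (le_min hM'y hπ) (le_max_right _ _)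
    rw [abs_of_nonpos (by linarith), abs_of_nonpos (by linarith)]
    linarith

/-- The Minimum Bounding Box mechanism on the l_p plane (p ≥ 2) is strategyproof:
no agent can strictly decrease their l_p distance to the output by misreporting. -/
theorem stmt12 {n : ℕ} (p : ℝ) (hp : 2 ≤ p)
    (x : Fin (n+1) → ℝ × ℝ) (π : ℝ × ℝ) (i : Fin (n+1)) (xi' : ℝ × ℝ) :
    dp p (x i) (bbox x π) ≤ dp p (x i) (bbox (Function.update x i xi') π) := by
  have hp0 : (0:ℝ) < p := by linarith
  have h1 := key (fun j => (x j).1) π.1 i xi'.1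
  have h2 := key (fun j => (x j).2) π.2 i xi'.2
  have e1 : (fun j => ((Function.update x i xi') j).1)
      = Function.update (fun j => (x j).1) i xi'.1 := by
    funext j; by_cases h : j = i <;> simp [h, Function.update]
  have e2 : (fun j => ((Function.update x i xi') j).2)
      = Function.update (fun j => (x j).2) i xi'.2 := by
    funext j; by_cases h : j = i <;> simp [h, Function.update]
  simp only [dp, bbox, e1, e2]
  apply Real.rpow_le_rpow
  · positivity
  · apply add_le_add
    · exact Real.rpow_le_rpow (abs_nonneg _) (by simpa using h1) hp0.le
    · exact Real.rpow_le_rpow (abs_nonneg _) (by simpa using h2) hp0.le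
  · positivity
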